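/- Let a, b, c ∈ ℝ and λ > 0 with b < 0, c < 0 and Disc(P) := a²b² + 4b³ − 4a³c − 18abc − 27c² < 0, and let A := {(i,j,k) ∈ ℕ³ : ai + bj + ck + λ ≤ 0}. Then there exist α > 0, ε ∈ (0,1], K < ∞ and a finite set B ⊂ ℕ³ such that the function V_α(i,j,k) := (i + αj)/(j + αk + 1) + 1 satisfies, for every (i,j,k) ∈ ℕ³: Σ_{ℓ∈ℕ} (e^{−s_{ijk}} s_{ijk}^ℓ / ℓ!) · V_α(ℓ, i, j) − V_α(i,j,k) ≤ −ε·V_α(i,j,k) + K·1_{A∪B}(i,j,k). -/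

import Mathlib

open scoped BigOperators
open Classical


/-- The Poisson probability mass function with parameter `s` at `k`. -/
noncomputable def poissonPMF (s : ℝ) (k : ℕ) : ℝ :=
  Real.exp (-s) * s ^ k / (Nat.factorial k)

/-- The (truncated) intensity `s_{ijk} = max(ai + bj + ck + λ, 0)`. -/
noncomputable def s3 (a b c lam : ℝ) (x : ℕ × ℕ × ℕ) : ℝ :=
  max (a * x.1 + b * x.2.1 + c * x.2.2 + lam) 0

/-- The Lyapunov function `V_α(i,j,k) := (i + αj)/(j + αk + 1) + 1`. -/
noncomputable def hawkesV3 (α : ℝ) (x : ℕ × ℕ × ℕ) : ℝ :=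
  ((x.1 : ℝ) + α * x.2.1) / ((x.2.1 : ℝ) + α * x.2.2 + 1) + 1

/-!
As `c < 0`, the polynomial `P` has a negative root `-α`, and `P = (X + α) Q` with
`Q = X² - (a + α) X + β`, `β = α² + aα - b`; since `Disc P = Disc Q · Q(-α)²`, the hypothesis
`Disc P < 0` says `(a + α)² < 4β`.

Write `N = i + αj` and `J = j + αk`, so that `V_α = N / (J + 1) + 1`. A Poisson step has
mean `s_{ijk}`, hence the expected next value of `V_α` is `(s_{ijk} + αi) / (N + 1) + 1`.
Off `A`, `s_{ijk} + αi = X + λ` with `X = (a + α) N - β J`, so `4β X J ≤ (a + α)² N²`, i.e.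
`X J ≤ ρ N²` with `ρ = (a + α)² / 4β < 1`; moreover `j` and `k` are `O(i)` there because
`b, c < 0`. Therefore, once `i` is large, the expected value is at most `(1 - ε) V_α`. The
states off `A` with bounded `i` form a finite set `B`, and everywhere the expected value is
bounded by `|a| + α + λ + 1`.
-/

theorem hasSum_poissonPMF (s : ℝ) : HasSum (poissonPMF s) 1 := by
  unfold poissonPMF
  have h := (NormedSpace.expSeries_div_hasSum_exp s).mul_left (Real.exp (-s))
  rw [← Real.exp_eq_exp_ℝ, ← Real.exp_add, neg_add_cancel, Real.exp_zero] at h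
  simpa only [mul_div_assoc] using h

theorem hasSum_mul_poissonPMF (s : ℝ) : HasSum (fun n : ℕ => n * poissonPMF s n) s := by
  have hshift (n : ℕ) : ((n : ℝ) + 1) * poissonPMF s (n + 1) = s * poissonPMF s n := by
    simp only [poissonPMF, Nat.factorial_succ, pow_succ]
    push_cast
    field_simp
  rw [← hasSum_nat_add_iff' 1]
  simpa [hshift] using (hasSum_poissonPMF s).mul_left s

theorem tsum_poissonPMF_mul_hawkesV3 (α s : ℝ) (x : ℕ × ℕ × ℕ) :
    ∑' ℓ : ℕ, poissonPMF s ℓ * hawkesV3 α (ℓ, x.1, x.2.1)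
      = (s + α * x.1) / (x.1 + α * x.2.1 + 1) + 1 := by
  set D : ℝ := x.1 + α * x.2.1 + 1
  have h := ((hasSum_mul_poissonPMF s).mul_left D⁻¹).add
    ((hasSum_poissonPMF s).mul_left (α * x.1 / D + 1))
  convert h.tsum_eq using 1
  · congr 1; ext ℓ; simp only [hawkesV3, D]; ring
  · ring

theorem s3_add_mul_div_le {a b c lam α : ℝ} (hb : b ≤ 0) (hc : c ≤ 0) (hlam : 0 ≤ lam)
    (hα : 0 ≤ α) (x : ℕ × ℕ × ℕ) :
    (s3 a b c lam x + α * x.1) / (x.1 + α * x.2.1 + 1) ≤ |a| + α + lam := by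
  have hi : 0 ≤ (x.1 : ℝ) := x.1.cast_nonneg
  have hj : 0 ≤ (x.2.1 : ℝ) := x.2.1.cast_nonneg
  have hk : 0 ≤ (x.2.2 : ℝ) := x.2.2.cast_nonneg
  have hs : s3 a b c lam x ≤ |a| * x.1 + lam :=
    max_le (by nlinarith [le_abs_self a]) (by positivity)
  rw [div_le_iff₀ (by positivity)]
  nlinarith [abs_nonneg a, mul_nonneg hα hj]

theorem exists_pos_root_of_cubic (p q r : ℝ) (hr : r < 0) :
    ∃ x, 0 < x ∧ x ^ 3 + p * x ^ 2 + q * x + r = 0 := by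
  set M := 1 + |p| + |q| + |r|
  have hM : 1 ≤ M := by simp only [M]; linarith [abs_nonneg p, abs_nonneg q, abs_nonneg r]
  have hM' : 0 < M ^ 3 + p * M ^ 2 + q * M + r := by
    have hp := mul_le_mul_of_nonneg_right (neg_abs_le p) (sq_nonneg M)
    have hq := mul_le_mul_of_nonneg_right (neg_abs_le q) (by linarith : 0 ≤ M)
    have hq' := mul_le_mul_of_nonneg_left (by nlinarith : M ≤ M ^ 2) (abs_nonneg q)
    have hr' := mul_le_mul_of_nonneg_left (by nlinarith : 1 ≤ M ^ 2) (abs_nonneg r)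
    have hcube : M ^ 3 = M ^ 2 + (|p| + |q| + |r|) * M ^ 2 := by simp only [M]; ring
    nlinarith [neg_abs_le r]
  obtain ⟨x, hx, hroot⟩ : ∃ x ∈ Set.Icc 0 M, x ^ 3 + p * x ^ 2 + q * x + r = 0 :=
    intermediate_value_Icc (by linarith) (by fun_prop) ⟨by simpa using hr.le, hM'.le⟩
  refine ⟨x, lt_of_le_of_ne hx.1 ?_, hroot⟩
  rintro rfl
  norm_num at hroot
  linarith

theorem sq_lt_of_discriminant_neg {a b c α : ℝ} (hroot : α ^ 3 + a * α ^ 2 - b * α + c = 0)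
    (hdisc : a ^ 2 * b ^ 2 + 4 * b ^ 3 - 4 * a ^ 3 * c - 18 * a * b * c - 27 * c ^ 2 < 0) :
    (a + α) ^ 2 < 4 * (α ^ 2 + a * α - b) := by
  have hfactor : a ^ 2 * b ^ 2 + 4 * b ^ 3 - 4 * a ^ 3 * c - 18 * a * b * c - 27 * c ^ 2
      = ((a + α) ^ 2 - 4 * (α ^ 2 + a * α - b)) * (3 * α ^ 2 + 2 * a * α - b) ^ 2 := by
    linear_combination (-27 * c - 4 * a ^ 3 - 18 * a * b + 27 * (α ^ 3 + a * α ^ 2 - b * α)) * hroot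
  by_contra! h
  nlinarith [mul_nonneg (sub_nonneg.2 h) (sq_nonneg (3 * α ^ 2 + 2 * a * α - b))]

theorem exists_drift_of_mul_le_sq (ρ D E T lam : ℝ) (hρ₀ : 0 ≤ ρ) (hρ₁ : ρ < 1) (hD : 0 ≤ D)
    (hE : 0 ≤ E) (hlam : 0 ≤ lam) :
    ∃ ε ∈ Set.Ioc (0 : ℝ) 1, ∃ N₀ : ℝ, ∀ N J X : ℝ, N₀ ≤ N → 0 ≤ J → X * J ≤ ρ * N ^ 2 →
      J ≤ D * N + E → X ≤ T * N → (X + lam) / (N + 1) + 1 ≤ (1 - ε) * (N / (J + 1) + 1) := by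
  set C := D + E + 1
  have hC : 1 ≤ C := by linarith
  refine ⟨(1 - ρ) / (8 * C), ⟨by positivity, ?_⟩, max 1 (2 * (T + lam * C) / (1 - ρ)),
    fun N J X hN hJ hXJ hJN hXN => ?_⟩
  · rw [div_le_one (by positivity)]; linarith
  set ε := (1 - ρ) / (8 * C)
  have hN₁ : 1 ≤ N := le_of_max_le_left hN
  have hNlarge : (T + lam * C) * N ≤ (1 - ρ) / 2 * N ^ 2 := by
    have := le_of_max_le_right hN
    rw [div_le_iff₀ (by linarith)] at this
    nlinarith
  have hJC : J + 1 ≤ C * N := by nlinarith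
  have hlamJ : lam * (J + 1) ≤ lam * (C * N) := mul_le_mul_of_nonneg_left hJC hlam
  have hεV : ε * ((N + (J + 1)) * (N + 1)) ≤ (1 - ρ) / 2 * N ^ 2 :=
    calc ε * ((N + (J + 1)) * (N + 1))
      _ ≤ ε * ((2 * C * N) * (2 * N)) := by
        gcongr
        · nlinarith
        · linarith
      _ = (1 - ρ) / 2 * N ^ 2 := by simp only [ε]; field_simp; ring
  rw [div_add_one (by linarith), div_add_one (by linarith), ← mul_div_assoc,
    div_le_div_iff₀ (by linarith) (by linarith)]
  nlinarith

theorem exists_drift_hawkesV3_of_pos {a b c lam α : ℝ} (hα : 0 < α) (hb : b < 0) (hc : c < 0)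
    (hlam : 0 ≤ lam) (hroot : α ^ 3 + a * α ^ 2 - b * α + c = 0)
    (hquad : (a + α) ^ 2 < 4 * (α ^ 2 + a * α - b)) :
    ∃ ε ∈ Set.Ioc (0 : ℝ) 1, ∃ N₀ : ℝ, ∀ x : ℕ × ℕ × ℕ,
      0 < a * x.1 + b * x.2.1 + c * x.2.2 + lam → N₀ ≤ x.1 →
        (s3 a b c lam x + α * x.1) / (x.1 + α * x.2.1 + 1) + 1 ≤ (1 - ε) * hawkesV3 α x := by
  set β := α ^ 2 + a * α - b
  have hβ : 0 < β := by nlinarith [sq_nonneg (a + α)]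
  set C := (-b)⁻¹ + α * (-c)⁻¹
  have hC : 0 ≤ C := add_nonneg (inv_nonneg.2 (by linarith))
    (mul_nonneg hα.le (inv_nonneg.2 (by linarith)))
  obtain ⟨ε, hε, N₀, hdrift⟩ := exists_drift_of_mul_le_sq ((a + α) ^ 2 / (4 * β)) (C * |a|)
    (C * lam) (|a| + α) lam (by positivity) ((div_lt_one (by positivity)).2 hquad)
    (mul_nonneg hC (abs_nonneg a)) (mul_nonneg hC hlam) hlam
  refine ⟨ε, hε, N₀, fun ⟨i, j, k⟩ hpos hN => ?_⟩
  dsimp only at hpos hN ⊢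
  have hi : 0 ≤ (i : ℝ) := i.cast_nonneg
  have hj : 0 ≤ (j : ℝ) := j.cast_nonneg
  have hk : 0 ≤ (k : ℝ) := k.cast_nonneg
  have hai : a * i ≤ |a| * i := mul_le_mul_of_nonneg_right (le_abs_self a) hi
  set N : ℝ := i + α * j
  set J : ℝ := j + α * k
  set X : ℝ := a * i + b * j + c * k + α * i
  have hiN : (i : ℝ) ≤ N := by simp only [N]; nlinarith
  have hX : X = (a + α) * N - β * J := by simp only [X, N, J, β]; linear_combination k * hroot
  have hXJ : X * J ≤ (a + α) ^ 2 / (4 * β) * N ^ 2 := by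
    have hsq : 4 * β * (X * J) = (a + α) ^ 2 * N ^ 2 - (2 * X - (a + α) * N) ^ 2 := by
      rw [hX]; ring
    rw [div_mul_eq_mul_div, le_div_iff₀ (by positivity)]
    linarith [sq_nonneg (2 * X - (a + α) * N)]
  have hj' : (j : ℝ) ≤ (|a| * i + lam) * (-b)⁻¹ := by
    rw [← div_eq_mul_inv, le_div_iff₀ (by linarith)]; nlinarith
  have hk' : (k : ℝ) ≤ (|a| * i + lam) * (-c)⁻¹ := by
    rw [← div_eq_mul_inv, le_div_iff₀ (by linarith)]; nlinarith
  have hJ : J ≤ C * |a| * N + C * lam := by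
    nlinarith [mul_le_mul_of_nonneg_left hiN (mul_nonneg hC (abs_nonneg a))]
  have hXN : X ≤ (|a| + α) * N := by
    nlinarith [mul_nonneg hα.le hj, mul_nonneg (abs_nonneg a) hj,
      mul_nonpos_of_nonpos_of_nonneg hb.le hj, mul_nonpos_of_nonpos_of_nonneg hc.le hk]
  have := hdrift N J X (hN.trans hiN) (by positivity) hXJ hJ hXN
  rwa [s3, max_eq_left hpos.le, show a * i + b * j + c * k + lam + α * i = X + lam by ring]

theorem finite_setOf_fst_le_of_pos {a b c lam : ℝ} (hb : b < 0) (hc : c < 0) (n : ℕ) :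
    {x : ℕ × ℕ × ℕ | x.1 ≤ n ∧ 0 < a * x.1 + b * x.2.1 + c * x.2.2 + lam}.Finite := by
  refine ((Set.finite_Iic n).prod ((Set.finite_Iio ⌈(|a| * n + lam) / -b⌉₊).prod
    (Set.finite_Iio ⌈(|a| * n + lam) / -c⌉₊))).subset ?_
  rintro ⟨i, j, k⟩ ⟨hi, hpos⟩
  dsimp only at hi hpos
  have hai : a * i ≤ |a| * n :=
    (mul_le_mul_of_nonneg_right (le_abs_self a) i.cast_nonneg).trans
      (mul_le_mul_of_nonneg_left (by exact_mod_cast hi) (abs_nonneg a))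
  have hj : 0 ≤ (j : ℝ) := j.cast_nonneg
  have hk : 0 ≤ (k : ℝ) := k.cast_nonneg
  refine ⟨hi, Nat.lt_ceil.2 ?_, Nat.lt_ceil.2 ?_⟩
  · rw [lt_div_iff₀ (by linarith)]; nlinarith
  · rw [lt_div_iff₀ (by linarith)]; nlinarith

/-- Under the hypotheses `b < 0`, `c < 0` and `Disc(P) < 0`, there exist `α > 0`,
`ε ∈ (0,1]`, `K < ∞` and a finite set `B ⊆ ℕ³` such that `V_α` satisfies the drift
condition `D(V_α, ε, K, A ∪ B)`, where `A = {(i,j,k) : ai + bj + ck + λ ≤ 0}`. -/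
theorem hawkes3_drift_condition (a b c lam : ℝ) (hlam : 0 < lam)
    (hb : b < 0) (hc : c < 0)
    (hdisc : a ^ 2 * b ^ 2 + 4 * b ^ 3 - 4 * a ^ 3 * c - 18 * a * b * c - 27 * c ^ 2 < 0) :
    ∃ α : ℝ, 0 < α ∧ ∃ ε : ℝ, ε ∈ Set.Ioc (0 : ℝ) 1 ∧ ∃ K : ℝ, ∃ B : Finset (ℕ × ℕ × ℕ),
      ∀ x : ℕ × ℕ × ℕ,
        (∑' ℓ : ℕ, poissonPMF (s3 a b c lam x) ℓ * hawkesV3 α (ℓ, x.1, x.2.1))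
            - hawkesV3 α x
          ≤ -ε * hawkesV3 α x
            + K * Set.indicator
                ({y : ℕ × ℕ × ℕ | a * y.1 + b * y.2.1 + c * y.2.2 + lam ≤ 0} ∪ ↑B)
                (fun _ => (1 : ℝ)) x := by
  obtain ⟨α, hα, hroot⟩ : ∃ α, 0 < α ∧ α ^ 3 + a * α ^ 2 - b * α + c = 0 := by
    simpa [sub_eq_add_neg] using exists_pos_root_of_cubic a (-b) c hc
  obtain ⟨ε, hε, N₀, hfar⟩ := exists_drift_hawkesV3_of_pos hα hb hc hlam.le hroot
    (sq_lt_of_discriminant_neg hroot hdisc)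
  refine ⟨α, hα, ε, hε, |a| + α + lam + 1,
    (finite_setOf_fst_le_of_pos (a := a) (lam := lam) hb hc ⌈N₀⌉₊).toFinset, fun x => ?_⟩
  have hV : 0 ≤ hawkesV3 α x := by unfold hawkesV3; positivity
  rw [tsum_poissonPMF_mul_hawkesV3, Set.indicator_apply]
  split_ifs with hx
  · nlinarith [s3_add_mul_div_le (a := a) hb.le hc.le hlam.le hα.le x, hε.2]
  · simp only [Set.mem_union, Set.mem_ofPred_eq, Set.Finite.coe_toFinset, not_or, not_le,
      not_and] at hx
    have hfirst : ⌈N₀⌉₊ < x.1 := lt_of_not_ge fun h => hx.2 h hx.1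
    have := hfar x hx.1 ((Nat.le_ceil N₀).trans (by exact_mod_cast hfirst.le))
    linarith
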